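/- For any distribution of x with finite second moments and any w, v ∈ ℝ^{d+1} with w ≠ v, letting u = (w − v)/‖w − v‖: ⟨∇F(w), w − v⟩ ≥ ‖w − v‖²·E[(u^⊤x)²·𝟙[w^⊤x ≥ 0 and v^⊤x ≥ 0]]. -/

import Mathlib

open MeasureTheory ProbabilityTheory Real
open scoped RealInnerProductSpace ENNReal

noncomputable section

abbrev Vec (d : ℕ) := EuclideanSpace ℝ (Fin d)
abbrev Par (d : ℕ) := EuclideanSpace ℝ (Fin d) × ℝ

/-- The ReLU function. -/
def relu (z : ℝ) : ℝ := max z 0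

/-- Its derivative (with the convention `relu' 0 = 1`). -/
def relu' (z : ℝ) : ℝ := if 0 ≤ z then 1 else 0

/-- `w^⊤ x` for a parameter `w = (w̃, b_w)` and a point `x = (x̃, 1)`. -/
def pdot {d : ℕ} (w : Par d) (x : Vec d) : ℝ := ⟪w.1, x⟫ + w.2

/-- Euclidean inner product on the parameter space `ℝ^{d+1}`. -/
def pip {d : ℕ} (w v : Par d) : ℝ := ⟪w.1, v.1⟫ + w.2 * v.2

/-- Euclidean norm on the parameter space `ℝ^{d+1}`. -/
def pnorm {d : ℕ} (w : Par d) : ℝ := Real.sqrt (‖w.1‖ ^ 2 + w.2 ^ 2)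

/-- The realizable loss `F(w) = (1/2) E[(σ(w^⊤x) − σ(v^⊤x))²]`. -/
def F {d : ℕ} (μx : Measure (Vec d)) (v w : Par d) : ℝ :=
  (1/2) * ∫ x, (relu (pdot w x) - relu (pdot v x)) ^ 2 ∂μx

/-- The gradient `∇F(w) = E[(σ(w^⊤x) − σ(v^⊤x)) σ'(w^⊤x) x]` with `x = (x̃, 1)`. -/
def gradF {d : ℕ} (μx : Measure (Vec d)) (v w : Par d) : Par d :=
  (∫ x, ((relu (pdot w x) - relu (pdot v x)) * relu' (pdot w x)) • x ∂μx,
   ∫ x, (relu (pdot w x) - relu (pdot v x)) * relu' (pdot w x) ∂μx)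

/-- The population loss `L(w) = (1/2) E[(σ(w^⊤x) − y)²]`. -/
def L {d : ℕ} (μ : Measure (Vec d × ℝ)) (w : Par d) : ℝ :=
  (1/2) * ∫ p, (relu (pdot w p.1) - p.2) ^ 2 ∂μ

/-- The gradient `∇L(w) = E[(σ(w^⊤x) − y) σ'(w^⊤x) x]` with `x = (x̃, 1)`. -/
def gradL {d : ℕ} (μ : Measure (Vec d × ℝ)) (w : Par d) : Par d :=
  (∫ p, ((relu (pdot w p.1) - p.2) * relu' (pdot w p.1)) • p.1 ∂μ,
   ∫ p, (relu (pdot w p.1) - p.2) * relu' (pdot w p.1) ∂μ)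

/-- The hypothesis class `H = {(w̃,b_w) : ‖w̃‖ ∈ [1/C₁, C₁], |b_w| ≤ C₂}`. -/
def Hset (d : ℕ) (C₁ C₂ : ℝ) : Set (Par d) :=
  {w | ‖w.1‖ ∈ Set.Icc C₁⁻¹ C₁ ∧ |w.2| ≤ C₂}

/-- Population gradient descent iterates `w_{t+1} = w_t − η ∇L(w_t)`. -/
def gdIter {d : ℕ} (μ : Measure (Vec d × ℝ)) (η : ℝ) (w0 : Par d) : ℕ → Par d
  | 0 => w0
  | t + 1 => gdIter μ η w0 t - η • gradL μ (gdIter μ η w0 t)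

/-- `O(1)`-regularity of a marginal distribution on `ℝ^d`. -/
structure Regular {d : ℕ} (μx : Measure (Vec d))
    (β₂' β₂ β₃ β₄ β₅ : ℝ) (β₀ : ℝ → ℝ) : Prop where
  int_four : ∀ u : Vec d, ‖u‖ = 1 → Integrable (fun x => ⟪u, x⟫ ^ 4) μx
  second_lb : ∀ u : Vec d, ‖u‖ = 1 → β₂'⁻¹ ≤ ∫ x, ⟪u, x⟫ ^ 2 ∂μx
  second_ub : ∀ u : Vec d, ‖u‖ = 1 → ∫ x, ⟪u, x⟫ ^ 2 ∂μx ≤ β₂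
  fourth_ub : ∀ u : Vec d, ‖u‖ = 1 → ∫ x, ⟪u, x⟫ ^ 4 ∂μx ≤ β₄
  anticonc : ∀ u : Vec d, ‖u‖ = 1 → ∀ δ : ℝ, 0 < δ → ∀ t : ℝ,
    (μx {x | ⟪u, x⟫ ∈ Set.Ioo (t - δ) (t + δ)}).toReal ≤ min (β₃ * δ) 1
  spread : ∀ u : Vec d, ‖u‖ = 1 → ∀ b : ℝ, β₀ |b| ≤ ∫ x, relu (⟪u, x⟫ + b) ∂μx
  spread_pos : ∀ r : ℝ, 0 ≤ r → 0 < β₀ r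
  proj2d : ∀ u₁ u₂ : Vec d, ‖u₁‖ = 1 → ‖u₂‖ = 1 → ⟪u₁, u₂⟫ = 0 →
    ∀ ε : ℝ, 0 < ε →
      ∃ G : Set ℝ, MeasurableSet G ∧ 1 - ε ≤ (μx {x | ⟪u₂, x⟫ ∈ G}).toReal ∧
        ∀ᵐ x ∂μx, ⟪u₂, x⟫ ∈ G →
          β₅ * ∫ x', relu ⟪u₁, x'⟫ ∂μx ≤
            (μx[fun x' => relu ⟪u₁, x'⟫ |
              MeasurableSpace.comap (fun x' : Vec d => ⟪u₂, x'⟫) Real.measurableSpace]) x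

/-- The standard Gaussian measure `N(0, I_d)` on `ℝ^d`. -/
def stdGaussian (d : ℕ) : Measure (Vec d) :=
  (Measure.pi fun _ : Fin d => gaussianReal 0 1).map
    fun x => (EuclideanSpace.equiv (Fin d) ℝ).symm x

/-- The uniform distribution on the unit sphere of `ℝ^d`
(obtained by normalizing a standard Gaussian vector). -/
def uniformSphere (d : ℕ) : Measure (Vec d) :=
  (stdGaussian d).map fun x => ‖x‖⁻¹ • x

/-- The radially symmetric initialization distribution of `w₀ = (ρ s ŵ, 0)`, where `ŵ` is a
uniformly random unit vector and `ρ` is the absolute value of an `N(0, β²)` variable. -/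
def initDist (d : ℕ) (β s : ℝ) : Measure (Par d) :=
  ((gaussianReal 0 (β ^ 2).toNNReal).prod (uniformSphere d)).map
    fun p => ((|p.1| * s) • p.2, (0 : ℝ))

/-! Write `r(x) = (σ(w^⊤x) − σ(v^⊤x)) σ'(w^⊤x)`, so that `⟨∇F(w), w − v⟩ = E[r(x) (w − v)^⊤x]`.
Pointwise, `r(x) (w − v)^⊤x ≥ ((w − v)^⊤x)² 𝟙[w^⊤x ≥ 0, v^⊤x ≥ 0]`: the left side vanishes when
`w^⊤x < 0`, equals `((w − v)^⊤x)²` when both are nonnegative, and equals `w^⊤x (w^⊤x − v^⊤x) ≥ 0`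
otherwise. Since `|r(x)| ≤ |(w − v)^⊤x|`, finite second moments make all integrands integrable. -/

lemma abs_relu_sub_relu_mul_relu'_le (a b : ℝ) : |(relu a - relu b) * relu' a| ≤ |a - b| := by
  rw [abs_mul]
  have hrelu' : |relu' a| ≤ 1 := by unfold relu'; split_ifs <;> simp
  exact (mul_le_mul (abs_max_sub_max_le_abs a b 0) hrelu' (abs_nonneg _) (abs_nonneg _)).trans_eq
    (mul_one _)

lemma sq_sub_mul_ite_le_relu_sub_relu_mul_relu' (a b : ℝ) :
    (a - b) ^ 2 * (if 0 ≤ a ∧ 0 ≤ b then 1 else 0) ≤ (relu a - relu b) * relu' a * (a - b) := by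
  unfold relu relu'
  rcases lt_or_ge a 0 with ha | ha
  · simp [ha.not_ge]
  rcases lt_or_ge b 0 with hb | hb
  · simp only [ha, hb.not_ge, and_false, ↓reduceIte, mul_zero, sup_of_le_left,
      max_eq_right hb.le, sub_zero, mul_one]
    nlinarith
  · simp only [ha, hb, and_self, ↓reduceIte, mul_one, sup_of_le_left]
    nlinarith

lemma measurable_relu : Measurable relu :=
  measurable_id.max measurable_const

lemma measurable_relu' : Measurable relu' :=
  Measurable.ite (measurableSet_le measurable_const measurable_id) measurable_const
    measurable_const

lemma memLp_two_id_of_integrable_inner_sq {ι : Type*} [Fintype ι]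
    {μ : Measure (EuclideanSpace ℝ ι)}
    (h2 : ∀ u : EuclideanSpace ℝ ι, Integrable (fun x => ⟪u, x⟫ ^ 2) μ) :
    MemLp id 2 μ := by
  classical
  refine memLp_piLp_iff.2 fun i => ?_
  have hcoord : (fun x : EuclideanSpace ℝ ι => x i) = fun x => ⟪EuclideanSpace.single i 1, x⟫ := by
    ext x; simp [EuclideanSpace.inner_single_left]
  change MemLp (fun x : EuclideanSpace ℝ ι => x i) 2 μ
  rw [hcoord, memLp_two_iff_integrable_sq (by fun_prop)]
  exact h2 _

section

variable {d : ℕ} {μ : Measure (Vec d)}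

lemma pdot_sub (w v : Par d) (x : Vec d) : pdot (w - v) x = pdot w x - pdot v x := by
  simp only [pdot, Prod.fst_sub, Prod.snd_sub, inner_sub_left]
  ring

lemma pdot_smul (c : ℝ) (w : Par d) (x : Vec d) : pdot (c • w) x = c * pdot w x := by
  simp only [pdot, Prod.smul_fst, Prod.smul_snd, real_inner_smul_left, smul_eq_mul]
  ring

lemma continuous_pdot (w : Par d) : Continuous (pdot w) := by
  unfold pdot
  fun_prop

lemma memLp_two_pdot [IsFiniteMeasure μ] (hx : MemLp id 2 μ) (w : Par d) :
    MemLp (pdot w) 2 μ := by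
  have hinner : MemLp (fun x : Vec d => ⟪w.1, x⟫) 2 μ := hx.const_inner w.1
  exact hinner.add (memLp_const w.2)

lemma pip_integral_smul_integral {g : Vec d → ℝ} [IsFiniteMeasure μ] (hg : MemLp g 2 μ)
    (hx : MemLp id 2 μ) (q : Par d) :
    pip (∫ x, g x • x ∂μ, ∫ x, g x ∂μ) q = ∫ x, g x * pdot q x ∂μ := by
  have hgx : Integrable (fun x => g x • x) μ :=
    memLp_one_iff_integrable.1 (hx.smul hg (r := 1))
  have hg1 : Integrable g μ := hg.integrable one_le_two
  rw [pip, real_inner_comm, ← integral_inner hgx, ← integral_mul_const,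
    ← integral_add (hgx.const_inner q.1) (hg1.mul_const q.2)]
  simp only [real_inner_smul_right, pdot]
  congr 1
  ext x
  ring

def gradFWeight (v w : Par d) (x : Vec d) : ℝ :=
  (relu (pdot w x) - relu (pdot v x)) * relu' (pdot w x)

lemma measurable_gradFWeight (v w : Par d) : Measurable (gradFWeight v w) :=
  ((measurable_relu.comp (continuous_pdot w).measurable).sub
    (measurable_relu.comp (continuous_pdot v).measurable)).mul
    (measurable_relu'.comp (continuous_pdot w).measurable)

lemma memLp_two_gradFWeight [IsFiniteMeasure μ] (hx : MemLp id 2 μ) (v w : Par d) :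
    MemLp (gradFWeight v w) 2 μ :=
  (memLp_two_pdot hx (w - v)).of_le (measurable_gradFWeight v w).aestronglyMeasurable <|
    ae_of_all _ fun x => by
      simpa only [Real.norm_eq_abs, pdot_sub, gradFWeight] using
        abs_relu_sub_relu_mul_relu'_le (pdot w x) (pdot v x)

lemma pip_gradF_eq_integral [IsFiniteMeasure μ] (hx : MemLp id 2 μ) (v w q : Par d) :
    pip (gradF μ v w) q = ∫ x, gradFWeight v w x * pdot q x ∂μ :=
  pip_integral_smul_integral (memLp_two_gradFWeight hx v w) hx q

lemma integral_sq_mul_indicator_le_pip_gradF [IsFiniteMeasure μ] (hx : MemLp id 2 μ)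
    (w v : Par d) :
    ∫ x, pdot (w - v) x ^ 2 *
        Set.indicator {x : Vec d | 0 ≤ pdot w x ∧ 0 ≤ pdot v x} (fun _ => (1 : ℝ)) x ∂μ ≤
      pip (gradF μ v w) (w - v) := by
  have hS : MeasurableSet {x : Vec d | 0 ≤ pdot w x ∧ 0 ≤ pdot v x} :=
    (measurableSet_le measurable_const (continuous_pdot w).measurable).inter
      (measurableSet_le measurable_const (continuous_pdot v).measurable)
  rw [pip_gradF_eq_integral hx]
  refine integral_mono ?_
    ((memLp_two_gradFWeight hx v w).integrable_mul (memLp_two_pdot hx (w - v))) fun x => ?_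
  · refine ((memLp_two_pdot hx (w - v)).integrable_sq.indicator hS).congr
      (ae_of_all _ fun x => ?_)
    simp [Set.indicator_apply]
  · simpa only [Set.indicator_apply, Set.mem_ofPred_eq, pdot_sub, gradFWeight] using
      sq_sub_mul_ite_le_relu_sub_relu_mul_relu' (pdot w x) (pdot v x)

end

theorem gradF_inner_ge_indicator_general (d : ℕ) (μx : Measure (Vec d)) [IsProbabilityMeasure μx]
    (h2 : ∀ u : Vec d, Integrable (fun x => ⟪u, x⟫ ^ 2) μx)
    (w v : Par d) :
    pnorm (w - v) ^ 2 *
        ∫ x, pdot ((pnorm (w - v))⁻¹ • (w - v)) x ^ 2 *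
          Set.indicator {x : Vec d | 0 ≤ pdot w x ∧ 0 ≤ pdot v x} (fun _ => (1 : ℝ)) x ∂μx ≤
      pip (gradF μx v w) (w - v) := by
  have hbound := integral_sq_mul_indicator_le_pip_gradF (μ := μx)
    (memLp_two_id_of_integrable_inner_sq h2) w v
  have hI_nonneg : 0 ≤ ∫ x, pdot (w - v) x ^ 2 *
      Set.indicator {x : Vec d | 0 ≤ pdot w x ∧ 0 ≤ pdot v x} (fun _ => (1 : ℝ)) x ∂μx :=
    integral_nonneg fun x =>
      mul_nonneg (sq_nonneg _) (Set.indicator_nonneg (fun _ _ => zero_le_one) x)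
  simp_rw [pdot_smul, mul_pow, mul_assoc]
  rw [integral_const_mul, ← mul_assoc, ← mul_pow]
  rcases eq_or_ne (pnorm (w - v)) 0 with h0 | h0
  · simpa [h0] using hI_nonneg.trans hbound
  · rwa [mul_inv_cancel₀ h0, one_pow, one_mul]

/-- With `u = (w − v)/‖w − v‖`,
`⟨∇F(w), w − v⟩ ≥ ‖w − v‖² E[(u^⊤x)² 𝟙[w^⊤x ≥ 0, v^⊤x ≥ 0]]`. -/
theorem gradF_inner_ge_indicator (d : ℕ) (μx : Measure (Vec d)) [IsProbabilityMeasure μx]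
    (h2 : ∀ u : Vec d, Integrable (fun x => ⟪u, x⟫ ^ 2) μx)
    (w v : Par d) (hwv : w ≠ v) :
    pnorm (w - v) ^ 2 *
        ∫ x, pdot ((pnorm (w - v))⁻¹ • (w - v)) x ^ 2 *
          Set.indicator {x : Vec d | 0 ≤ pdot w x ∧ 0 ≤ pdot v x} (fun _ => (1 : ℝ)) x ∂μx ≤
      pip (gradF μx v w) (w - v) :=
  gradF_inner_ge_indicator_general d μx h2 w v
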